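/- arXiv:0904.2809 — 6 statements merged into one kernel-verified Lean document; each statement's English description precedes it below -/
import Mathlib

section
/- For any complex symmetric n×n matrix T, there exists a unitary matrix U such that ∑_i |(Uᵀ T U)_{ii}| equals the trace norm ‖T‖ = Tr(√(T T†)). -/
/-!
A complex symmetric `T` admits a Takagi factorization: a unitary `U` with `Uᵀ T U` diagonal with
nonnegative entries `σᵢ`. By induction on the size: the antilinear map `x ↦ conj (T x)` squares
to `Tᴴ T`, so an eigenvector of `Tᴴ T` produces a unit vector `v` with `T v = σ conj v`, and a
unitary having `v` as a column splits `σ` off as a `1 × 1` block. Since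
`(Uᵀ T U) (Uᵀ T U)ᴴ = Uᵀ (T Tᴴ) (Uᵀ)ᴴ`, the trace norm is invariant under `T ↦ Uᵀ T U`, and the
trace norm of the diagonal matrix is `∑ σᵢ = ∑ |(Uᵀ T U)ᵢᵢ|`.
-/

open scoped BigOperators Matrix ComplexOrder

/-- The trace norm of a complex matrix: `‖T‖ = Tr √(T Tᴴ)`, the sum of the
singular values of `T`. -/
noncomputable def traceNorm {n : ℕ} (T : Matrix (Fin n) (Fin n) ℂ) : ℝ :=
  (((Matrix.posSemidef_self_mul_conjTranspose T).1.eigenvectorUnitary.1 *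
      Matrix.diagonal (((↑) : ℝ → ℂ) ∘ Real.sqrt ∘ (Matrix.posSemidef_self_mul_conjTranspose T).1.eigenvalues) *
      (star (Matrix.posSemidef_self_mul_conjTranspose T).1.eigenvectorUnitary :
        Matrix (Fin n) (Fin n) ℂ)).trace).re

open scoped MatrixOrder

namespace CFC

variable {A : Type*} [PartialOrder A] [Ring A] [TopologicalSpace A] [StarRing A]
  [Module ℝ A] [SMulCommClass ℝ A A] [IsScalarTower ℝ A A] [StarOrderedRing A]
  [NonUnitalContinuousFunctionalCalculus ℝ A IsSelfAdjoint]
  [NonnegSpectrumClass ℝ A] [IsSemitopologicalRing A] [T2Space A]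

lemma sqrt_unitary_conj {u : A} (hu : u ∈ unitary A) {a : A} (ha : 0 ≤ a) :
    sqrt (u * a * star u) = u * sqrt a * star u := by
  refine sqrt_unique ?_ (star_right_conjugate_nonneg (sqrt_nonneg a) u)
  calc u * sqrt a * star u * (u * sqrt a * star u)
      = u * sqrt a * (star u * u) * sqrt a * star u := by noncomm_ring
    _ = u * a * star u := by
      rw [Unitary.star_mul_self_of_mem hu, mul_one, mul_assoc u, sqrt_mul_sqrt_self a ha]

end CFC

namespace Matrix

lemma submatrix_sumCompl_eq_fromBlocks {ι α : Type*} [DecidableEq ι] [Zero α]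
    {M : Matrix ι ι α} (hM : Mᵀ = M) {i₀ : ι} {c : α} (hcol : M.col i₀ = Pi.single i₀ c) :
    M.submatrix (Equiv.sumCompl (· = i₀)) (Equiv.sumCompl (· = i₀)) =
      fromBlocks (diagonal fun _ => c) 0 0 (M.submatrix Subtype.val Subtype.val) := by
  have hrow (j : ι) : M i₀ j = (Pi.single i₀ c : ι → α) j := by
    rw [← hM]; exact congrFun hcol j
  ext (⟨i, rfl⟩ | ⟨i, hi⟩) (⟨j, rfl⟩ | ⟨j, hj⟩)
  · simp [hrow]
  · simp [hrow, hj]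
  · simpa [hi] using congrFun hcol i
  · rfl

lemma star_mulVec_star_mulVec_of_transpose_eq {ι : Type*} [Fintype ι] {T : Matrix ι ι ℂ}
    (hT : Tᵀ = T) (x : ι → ℂ) :
    star (T *ᵥ star (T *ᵥ x)) = (Tᴴ * T) *ᵥ x := by
  have hTH : Tᴴᵀ = Tᴴ := by rw [← conjTranspose_transpose_eq_transpose_conjTranspose, hT]
  rw [star_mulVec, star_star, ← hTH, vecMul_transpose, hTH, mulVec_mulVec]

variable {ι κ : Type*} [Fintype ι] [DecidableEq ι] [Fintype κ] [DecidableEq κ]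

lemma sqrt_diagonal_sq {d : ι → ℝ} (hd : 0 ≤ d) :
    CFC.sqrt (diagonal fun i => ((d i ^ 2 : ℝ) : ℂ)) = diagonal fun i => (d i : ℂ) := by
  refine CFC.sqrt_unique ?_ ?_
  · simp [diagonal_mul_diagonal, sq]
  · exact (PosSemidef.diagonal (fun i => by simpa using hd i)).nonneg

lemma exists_mem_unitaryGroup_col_eq (v : EuclideanSpace ℂ ι) (hv : ‖v‖ = 1) (i₀ : ι) :
    ∃ U ∈ unitaryGroup ι ℂ, U.col i₀ = ⇑v := by
  have hsingle : Orthonormal ℂ (({i₀} : Set ι).domRestrict fun _ => v) := by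
    rw [orthonormal_iff_ite]
    rintro ⟨i, rfl⟩ ⟨j, rfl⟩
    simp [Set.domRestrict, inner_self_eq_norm_sq_to_K, hv]
  obtain ⟨b, hb⟩ := hsingle.exists_orthonormalBasis_extension_of_card_eq
    (by simp [finrank_euclideanSpace])
  refine ⟨(EuclideanSpace.basisFun ι ℂ).toBasis.toMatrix b,
    (EuclideanSpace.basisFun ι ℂ).toMatrix_orthonormalBasis_mem_unitary b, ?_⟩
  ext i
  simp [Module.Basis.toMatrix_apply, hb i₀ rfl]

section Symmetric

variable {T : Matrix ι ι ℂ}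

lemma exists_mulVec_eq_smul_star [Nonempty ι] (hT : Tᵀ = T) :
    ∃ σ : ℝ, 0 ≤ σ ∧ ∃ x : ι → ℂ, x ≠ 0 ∧ T *ᵥ x = (σ : ℂ) • star x := by
  have hA := posSemidef_conjTranspose_mul_self T
  obtain ⟨i⟩ := ‹Nonempty ι›
  set w : ι → ℂ := ⇑(hA.1.eigenvectorBasis i)
  have hw : w ≠ 0 :=
    (WithLp.ofLp_eq_zero (p := 2)).not.mpr (hA.1.eigenvectorBasis.orthonormal.ne_zero i)
  set σ := Real.sqrt (hA.1.eigenvalues i)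
  have hσ : (Tᴴ * T) *ᵥ w = ((σ * σ : ℝ) : ℂ) • w := by
    rw [Real.mul_self_sqrt (hA.eigenvalues_nonneg i), hA.1.mulVec_eigenvectorBasis i,
      Complex.coe_smul]
  -- The antilinear `x ↦ star (T *ᵥ x)` squares to `Tᴴ * T`, which is `σ²` on `w`; so it maps
  -- `x := star (T *ᵥ w) + σ w` to `σ x`, and, if that `x` vanishes, `I • w` to `σ (I • w)`.
  refine ⟨σ, Real.sqrt_nonneg _, ?_⟩
  set x := star (T *ᵥ w) + (σ : ℂ) • w
  have hx : star (T *ᵥ x) = (σ : ℂ) • x := by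
    rw [mulVec_add, mulVec_smul, star_add, star_mulVec_star_mulVec_of_transpose_eq hT, hσ,
      star_smul, Complex.star_def, Complex.conj_ofReal, smul_add, smul_smul,
      Complex.ofReal_mul, add_comm]
  by_cases hx0 : x = 0
  · refine ⟨Complex.I • w, smul_ne_zero Complex.I_ne_zero hw, ?_⟩
    have hTw : star (T *ᵥ w) = -((σ : ℂ) • w) := eq_neg_of_add_eq_zero_left hx0
    rw [mulVec_smul, ← star_star (T *ᵥ w), hTw, star_neg, star_smul, star_smul]
    simp [smul_comm Complex.I]
  · refine ⟨x, hx0, ?_⟩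
    rw [← star_star (T *ᵥ x), hx, star_smul, Complex.star_def, Complex.conj_ofReal]

lemma exists_mem_unitaryGroup_col_transpose_mul_mul_eq_single (hT : Tᵀ = T) (i₀ : ι) :
    ∃ U ∈ unitaryGroup ι ℂ, ∃ σ : ℝ, 0 ≤ σ ∧
      (Uᵀ * T * U).col i₀ = Pi.single i₀ (σ : ℂ) := by
  have : Nonempty ι := ⟨i₀⟩
  obtain ⟨σ, hσ, x, hx0, hx⟩ := exists_mulVec_eq_smul_star hT
  set v : EuclideanSpace ℂ ι := WithLp.toLp 2 x
  have hv0 : v ≠ 0 := (WithLp.toLp_eq_zero 2).not.mpr hx0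
  obtain ⟨U, hU, hUcol⟩ :=
    exists_mem_unitaryGroup_col_eq _ (norm_smul_inv_norm (𝕜 := ℂ) hv0) i₀
  refine ⟨U, hU, σ, hσ, ?_⟩
  have hTcol : T *ᵥ U.col i₀ = (σ : ℂ) • star (U.col i₀) := by
    rw [hUcol, WithLp.ofLp_smul, mulVec_smul, show v.ofLp = x from rfl, hx, star_smul,
      smul_comm]
    simp [Complex.conj_ofReal]
  calc (Uᵀ * T * U).col i₀ = Uᵀ *ᵥ (T *ᵥ U.col i₀) := by
        rw [← mulVec_single_one, ← mulVec_mulVec, ← mulVec_mulVec, mulVec_single_one]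
    _ = (σ : ℂ) • star (Uᴴ *ᵥ (U *ᵥ Pi.single i₀ 1)) := by
        rw [hTcol, mulVec_smul, star_mulVec, conjTranspose_conjTranspose, ← vecMul_transpose,
          transpose_transpose, mulVec_single_one]
    _ = Pi.single i₀ (σ : ℂ) := by
        rw [mulVec_mulVec, ← star_eq_conjTranspose, Unitary.star_mul_self_of_mem hU, one_mulVec]
        ext j
        simp [Pi.single_apply]

end Symmetric

def IsTakagiDiagonalizable (T : Matrix ι ι ℂ) : Prop :=
  ∃ U ∈ unitaryGroup ι ℂ, ∃ d : ι → ℝ, 0 ≤ d ∧ Uᵀ * T * U = diagonal fun i => (d i : ℂ)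

lemma isTakagiDiagonalizable_diagonal {d : ι → ℝ} (hd : 0 ≤ d) :
    IsTakagiDiagonalizable (diagonal fun i => (d i : ℂ)) :=
  ⟨1, one_mem _, d, hd, by simp⟩

lemma IsTakagiDiagonalizable.of_transpose_mul_mul {T U : Matrix ι ι ℂ}
    (hU : U ∈ unitaryGroup ι ℂ) (h : IsTakagiDiagonalizable (Uᵀ * T * U)) :
    IsTakagiDiagonalizable T := by
  obtain ⟨V, hV, d, hd, hVd⟩ := h
  refine ⟨U * V, mul_mem hU hV, d, hd, ?_⟩
  rw [← hVd, transpose_mul]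
  simp only [Matrix.mul_assoc]

lemma IsTakagiDiagonalizable.of_submatrix {T : Matrix ι ι ℂ} (e : κ ≃ ι)
    (h : IsTakagiDiagonalizable (T.submatrix e e)) : IsTakagiDiagonalizable T := by
  obtain ⟨V, hV, d, hd, hVd⟩ := h
  refine ⟨V.submatrix e.symm e.symm, ?_, d ∘ e.symm, fun i => hd _, ?_⟩
  · rw [mem_unitaryGroup_iff] at hV ⊢
    rw [star_eq_conjTranspose, conjTranspose_submatrix, submatrix_mul_equiv,
      ← star_eq_conjTranspose, hV, submatrix_one_equiv]
  · have hT : T = (T.submatrix e e).submatrix e.symm e.symm := by simp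
    rw [transpose_submatrix, hT, submatrix_mul_equiv, submatrix_mul_equiv, hVd,
      submatrix_diagonal_equiv]
    rfl

lemma IsTakagiDiagonalizable.fromBlocks {A : Matrix ι ι ℂ} {B : Matrix κ κ ℂ}
    (hA : IsTakagiDiagonalizable A) (hB : IsTakagiDiagonalizable B) :
    IsTakagiDiagonalizable (fromBlocks A 0 0 B) := by
  obtain ⟨U, hU, d, hd, hUd⟩ := hA
  obtain ⟨V, hV, d', hd', hVd'⟩ := hB
  rw [mem_unitaryGroup_iff, star_eq_conjTranspose] at hU hV
  refine ⟨Matrix.fromBlocks U 0 0 V, ?_, Sum.elim d d', Sum.rec hd hd', ?_⟩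
  · rw [mem_unitaryGroup_iff, star_eq_conjTranspose, fromBlocks_conjTranspose,
      fromBlocks_multiply]
    simp [hU, hV]
  · rw [fromBlocks_transpose, fromBlocks_multiply, fromBlocks_multiply]
    simp only [Matrix.mul_zero, Matrix.zero_mul, add_zero, zero_add, transpose_zero, hUd, hVd',
      fromBlocks_diagonal]
    congr 1
    ext (i | i) <;> rfl

theorem isTakagiDiagonalizable_of_transpose_eq {T : Matrix ι ι ℂ} (hT : Tᵀ = T) :
    IsTakagiDiagonalizable T := by
  induction h : Fintype.card ι using Nat.strong_induction_on generalizing ι with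
  | _ n ih =>
  rcases isEmpty_or_nonempty ι with _ | ⟨⟨i₀⟩⟩
  · exact ⟨1, one_mem _, 0, le_rfl, Subsingleton.elim _ _⟩
  obtain ⟨U, hU, σ, hσ, hcol⟩ := exists_mem_unitaryGroup_col_transpose_mul_mul_eq_single hT i₀
  refine .of_transpose_mul_mul hU (.of_submatrix (Equiv.sumCompl (· = i₀)) ?_)
  have hM : (Uᵀ * T * U)ᵀ = Uᵀ * T * U := by
    simp only [transpose_mul, transpose_transpose, hT, Matrix.mul_assoc]
  rw [submatrix_sumCompl_eq_fromBlocks hM hcol]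
  refine (isTakagiDiagonalizable_diagonal fun _ => hσ).fromBlocks (ih _ ?_ ?_ rfl)
  · exact h ▸ Fintype.card_subtype_lt (p := (· ≠ i₀)) (not_not_intro rfl)
  · rw [transpose_submatrix, hM]

end Matrix

lemma traceNorm_eq_re_trace_sqrt {n : ℕ} (T : Matrix (Fin n) (Fin n) ℂ) :
    traceNorm T = (CFC.sqrt (T * Tᴴ)).trace.re := by
  have hA := Matrix.posSemidef_self_mul_conjTranspose T
  rw [CFC.sqrt_eq_real_sqrt _ hA.nonneg, cfcₙ_eq_cfc, hA.1.cfc_eq]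
  rfl

lemma traceNorm_transpose_mul_mul {n : ℕ} (T : Matrix (Fin n) (Fin n) ℂ)
    {U : Matrix (Fin n) (Fin n) ℂ} (hU : U ∈ Matrix.unitaryGroup (Fin n) ℂ) :
    traceNorm (Uᵀ * T * U) = traceNorm T := by
  have hUt : Uᵀ ∈ Matrix.unitaryGroup (Fin n) ℂ := Matrix.transpose_mem_unitaryGroup_iff.mpr hU
  have hsq : (Uᵀ * T * U) * (Uᵀ * T * U)ᴴ = Uᵀ * (T * Tᴴ) * star Uᵀ := by
    rw [← Matrix.star_eq_conjTranspose, ← Matrix.star_eq_conjTranspose, star_mul, star_mul]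
    calc _ = Uᵀ * T * (U * star U) * star T * star Uᵀ := by simp only [mul_assoc]
      _ = _ := by rw [Unitary.mul_star_self_of_mem hU, mul_one]; simp only [mul_assoc]
  rw [traceNorm_eq_re_trace_sqrt, traceNorm_eq_re_trace_sqrt, hsq,
    CFC.sqrt_unitary_conj hUt (Matrix.posSemidef_self_mul_conjTranspose T).nonneg,
    Matrix.trace_mul_cycle, Unitary.star_mul_self_of_mem hUt, Matrix.one_mul]

lemma traceNorm_diagonal_ofReal {n : ℕ} {d : Fin n → ℝ} (hd : 0 ≤ d) :
    traceNorm (Matrix.diagonal fun i => (d i : ℂ)) = ∑ i, d i := by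
  have hsq : (Matrix.diagonal fun i => (d i : ℂ)) * (Matrix.diagonal fun i => (d i : ℂ))ᴴ =
      Matrix.diagonal fun i => ((d i ^ 2 : ℝ) : ℂ) := by
    simp [Matrix.diagonal_conjTranspose, Matrix.diagonal_mul_diagonal, sq]
  rw [traceNorm_eq_re_trace_sqrt, hsq, Matrix.sqrt_diagonal_sq hd, Matrix.trace_diagonal,
    Complex.re_sum]
  rfl

/-- For any complex symmetric matrix `T` there is a unitary `U` such that
`∑ i |(Uᵀ T U)ᵢᵢ|` equals the trace norm of `T`. -/
theorem exists_unitary_diag_abs_sum_eq_traceNorm {n : ℕ}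
    (T : Matrix (Fin n) (Fin n) ℂ) (hT : Tᵀ = T) :
    ∃ U ∈ Matrix.unitaryGroup (Fin n) ℂ,
      ∑ i, ‖(Uᵀ * T * U) i i‖ = traceNorm T := by
  obtain ⟨U, hU, d, hd, hUd⟩ := Matrix.isTakagiDiagonalizable_of_transpose_eq hT
  refine ⟨U, hU, ?_⟩
  rw [← traceNorm_transpose_mul_mul T hU, hUd, traceNorm_diagonal_ofReal hd]
  simp [abs_of_nonneg (hd _)]
end

section
/- For any complex symmetric n×n matrix T with singular values λ_1,…,λ_n and any unitary n×n matrix V, ∑_i |(Vᵀ T V)_{ii}| ≤ ∑_i λ_i, i.e., ∑_i |(Vᵀ T V)_{ii}| ≤ ‖T‖ (trace norm). -/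
open scoped BigOperators Matrix ComplexOrder

/-!
Choose a unitary `P` diagonalising `T Tᴴ`, so that `Pᴴ T Tᴴ P = diag(λ₁², …, λₙ²)`, and factor
`Vᵀ T V = A B` with `A = Vᵀ P` and `B = Pᴴ T V`. The columns of `A` are unit vectors and the
`k`-th row of `B` has norm `λₖ`. Expanding each diagonal entry of `A B`, exchanging the two sums
and applying Cauchy–Schwarz gives `∑ᵢ |(A B)ᵢᵢ| ≤ ∑ₖ ‖A₍·ₖ₎‖ ‖B₍ₖ·₎‖ = ∑ₖ λₖ`.
-/

open Matrix

namespace Matrix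

variable {𝕜 m l : Type*} [RCLike 𝕜] [Fintype m]

theorem conjTranspose_mul_self_apply_self (A : Matrix m l 𝕜) (k : l) :
    (Aᴴ * A) k k = ((∑ i, ‖A i k‖ ^ 2 : ℝ) : 𝕜) := by
  simp only [mul_apply, conjTranspose_apply, RCLike.star_def, RCLike.conj_mul,
    RCLike.ofReal_sum, RCLike.ofReal_pow]

theorem mul_conjTranspose_self_apply_self (B : Matrix l m 𝕜) (k : l) :
    (B * Bᴴ) k k = ((∑ i, ‖B k i‖ ^ 2 : ℝ) : 𝕜) := by
  simp only [mul_apply, conjTranspose_apply, RCLike.star_def, RCLike.mul_conj,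
    RCLike.ofReal_sum, RCLike.ofReal_pow]

theorem sum_norm_diag_mul_le [Fintype l] (A : Matrix m l 𝕜) (B : Matrix l m 𝕜) :
    ∑ i, ‖(A * B) i i‖ ≤ ∑ k, √(∑ i, ‖A i k‖ ^ 2) * √(∑ i, ‖B k i‖ ^ 2) :=
  calc ∑ i, ‖(A * B) i i‖
      ≤ ∑ i, ∑ k, ‖A i k‖ * ‖B k i‖ := by
        gcongr with i
        rw [mul_apply]
        exact (norm_sum_le _ _).trans_eq (by simp only [norm_mul])
    _ = ∑ k, ∑ i, ‖A i k‖ * ‖B k i‖ := Finset.sum_comm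
    _ ≤ ∑ k, √(∑ i, ‖A i k‖ ^ 2) * √(∑ i, ‖B k i‖ ^ 2) := by
        gcongr with k
        exact Real.sum_mul_le_sqrt_mul_sqrt _ _ _

theorem sum_norm_diag_mul_le_sum_sqrt [Fintype l] [DecidableEq l]
    {A : Matrix m l 𝕜} {B : Matrix l m 𝕜} {d : l → ℝ}
    (hA : Aᴴ * A = 1) (hB : B * Bᴴ = diagonal (RCLike.ofReal ∘ d)) :
    ∑ i, ‖(A * B) i i‖ ≤ ∑ k, √(d k) := by
  have hcol (k : l) : ∑ i, ‖A i k‖ ^ 2 = 1 := by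
    have h := conjTranspose_mul_self_apply_self A k
    rw [hA, one_apply_eq] at h
    exact_mod_cast h.symm
  have hrow (k : l) : ∑ i, ‖B k i‖ ^ 2 = d k := by
    have h := mul_conjTranspose_self_apply_self B k
    rw [hB, diagonal_apply_eq, Function.comp_apply] at h
    exact_mod_cast h.symm
  simpa only [hcol, hrow, Real.sqrt_one, one_mul] using sum_norm_diag_mul_le A B

end Matrix

theorem traceNorm_eq_sum_sqrt_eigenvalues {n : ℕ} (T : Matrix (Fin n) (Fin n) ℂ) :
    traceNorm T = ∑ k, √((posSemidef_self_mul_conjTranspose T).1.eigenvalues k) := by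
  rw [traceNorm, trace_mul_cycle, Unitary.coe_star_mul_self, one_mul, trace_diagonal]
  simp [← Complex.ofReal_sum]

theorem sum_abs_diag_le_traceNorm_general {n : ℕ}
    (T : Matrix (Fin n) (Fin n) ℂ)
    (V : Matrix (Fin n) (Fin n) ℂ) (hV : V ∈ Matrix.unitaryGroup (Fin n) ℂ) :
    ∑ i, ‖(Vᵀ * T * V) i i‖ ≤ traceNorm T := by
  set hH := (posSemidef_self_mul_conjTranspose T).1
  set P : Matrix (Fin n) (Fin n) ℂ := hH.eigenvectorUnitary.1
  have hP : P ∈ unitaryGroup (Fin n) ℂ := hH.eigenvectorUnitary.2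
  have hfactor : Vᵀ * T * V = (Vᵀ * P) * (Pᴴ * T * V) :=
    calc Vᵀ * T * V = Vᵀ * (P * Pᴴ) * T * V := by
          rw [← star_eq_conjTranspose, mem_unitaryGroup_iff.mp hP, mul_one]
      _ = (Vᵀ * P) * (Pᴴ * T * V) := by simp only [mul_assoc]
  have hA : (Vᵀ * P)ᴴ * (Vᵀ * P) = 1 :=
    mem_unitaryGroup_iff'.mp (Submonoid.mul_mem _ (transpose_mem_unitaryGroup_iff.mpr hV) hP)
  have hB : (Pᴴ * T * V) * (Pᴴ * T * V)ᴴ = diagonal (RCLike.ofReal ∘ hH.eigenvalues) :=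
    calc (Pᴴ * T * V) * (Pᴴ * T * V)ᴴ = Pᴴ * T * (V * Vᴴ) * Tᴴ * P := by
          simp only [conjTranspose_mul, conjTranspose_conjTranspose, mul_assoc]
      _ = Pᴴ * (T * Tᴴ) * P := by
          rw [← star_eq_conjTranspose V, mem_unitaryGroup_iff.mp hV, mul_one, mul_assoc Pᴴ]
      _ = diagonal (RCLike.ofReal ∘ hH.eigenvalues) := by
          rw [← star_eq_conjTranspose]
          simpa using hH.conjStarAlgAut_star_eigenvectorUnitary
  rw [traceNorm_eq_sum_sqrt_eigenvalues, hfactor]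
  exact sum_norm_diag_mul_le_sum_sqrt hA hB

/-- For a complex symmetric matrix `T` and any unitary `V`,
`∑ i |(Vᵀ T V)ᵢᵢ| ≤ ‖T‖` (the trace norm, i.e. the sum of singular values). -/
theorem sum_abs_diag_le_traceNorm {n : ℕ}
    (T : Matrix (Fin n) (Fin n) ℂ) (hT : Tᵀ = T)
    (V : Matrix (Fin n) (Fin n) ℂ) (hV : V ∈ Matrix.unitaryGroup (Fin n) ℂ) :
    ∑ i, ‖(Vᵀ * T * V) i i‖ ≤ traceNorm T :=
  sum_abs_diag_le_traceNorm_general T V hV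
end

section
/- The entanglement of assistance satisfies the upper bound E_a(ρ_{AB})² ≤ 2(1 − Tr ρ_A²), where ρ_A = Tr_B ρ_{AB}. -/
open scoped BigOperators Matrix ComplexOrder ComplexConjugate

noncomputable section

/-- The rank-one projector `|φ⟩⟨φ|` associated with a vector `φ`. -/
def projM {α : Type*} [Fintype α] (φ : α → ℂ) : Matrix α α ℂ :=
  fun x y => φ x * conj (φ y)

/-- Partial trace over the second tensor factor. -/
def trB {A B : Type*} [Fintype A] [Fintype B]
    (ρ : Matrix (A × B) (A × B) ℂ) : Matrix A A ℂ :=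
  fun i j => ∑ k, ρ (i, k) (j, k)

/-- The purity `Tr(ρ²)` of a state. -/
def purity {A : Type*} [Fintype A] (ρ : Matrix A A ℂ) : ℝ :=
  ((ρ * ρ).trace).re

/-- The squared I-concurrence of a bipartite pure state `φ`:
`C(φ)² = 2 (1 − Tr ρ_A²)`. -/
def Csq {A B : Type*} [Fintype A] [Fintype B] (φ : A × B → ℂ) : ℝ :=
  2 * (1 - purity (trB (projM φ)))

/-- The I-concurrence of a bipartite pure state. -/
def Iconc {A B : Type*} [Fintype A] [Fintype B] (φ : A × B → ℂ) : ℝ :=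
  Real.sqrt (Csq φ)

/-- `p, φ` is a pure-state decomposition of `ρ`: the weights are nonnegative,
the vectors are normalized, and `ρ = ∑ i, p i • |φ i⟩⟨φ i|`. -/
def IsDecomp {A B : Type*} [Fintype A] [Fintype B]
    (ρ : Matrix (A × B) (A × B) ℂ) {m : ℕ}
    (p : Fin m → ℝ) (φ : Fin m → A × B → ℂ) : Prop :=
  (∀ i, 0 ≤ p i) ∧ (∀ i, (∑ x, ‖φ i x‖ ^ 2) = 1) ∧
    ρ = ∑ i, (p i : ℂ) • projM (φ i)

/-- The entanglement of assistance of a bipartite state, defined with the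
I-concurrence: the supremum of the average concurrence over all pure-state
decompositions. -/
def Ea {A B : Type*} [Fintype A] [Fintype B]
    (ρ : Matrix (A × B) (A × B) ℂ) : ℝ :=
  sSup {v | ∃ (m : ℕ) (p : Fin m → ℝ) (φ : Fin m → A × B → ℂ),
    IsDecomp ρ p φ ∧ v = ∑ i, p i * Iconc (φ i)}

/-- The tangle of assistance of a bipartite state: the supremum of the average
squared I-concurrence over all pure-state decompositions. -/
def tauA {A B : Type*} [Fintype A] [Fintype B]
    (ρ : Matrix (A × B) (A × B) ℂ) : ℝ :=
  sSup {v | ∃ (m : ℕ) (p : Fin m → ℝ) (φ : Fin m → A × B → ℂ),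
    IsDecomp ρ p φ ∧ v = ∑ i, p i * Csq (φ i)}

/-!
For a decomposition `ρ = ∑ pᵢ |φᵢ⟩⟨φᵢ|` with reduced states `ρᵢ = Tr_B |φᵢ⟩⟨φᵢ|`, Jensen gives
`(∑ pᵢ C(φᵢ))² ≤ ∑ pᵢ C(φᵢ)² = 2 (1 - ∑ pᵢ Tr ρᵢ²)`. Since `ρ_A = ∑ pᵢ ρᵢ` and the purity
`Tr σ² = ∑ₐ,ᵦ |σ_ab|²` of a Hermitian `σ` is convex, `Tr ρ_A² ≤ ∑ pᵢ Tr ρᵢ²`. The bound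
`2 (1 - Tr ρ_A²)` is nonnegative because `|σ_ab|² ≤ σ_aa σ_bb` for the positive semidefinite
`σ = ρ_A`, whence `Tr ρ_A² ≤ (Tr ρ_A)² = 1`.
-/
lemma Matrix.PosSemidef.norm_apply_sq_le {n : Type*} [Fintype n] {A : Matrix n n ℂ}
    (hA : A.PosSemidef) (i j : n) : ‖A i j‖ ^ 2 ≤ (A i i).re * (A j j).re := by
  classical
  have hdet := (hA.submatrix ![i, j]).det_nonneg
  rw [Matrix.det_fin_two] at hdet
  simp only [Matrix.submatrix_apply, Matrix.cons_val_zero, Matrix.cons_val_one] at hdet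
  rw [← hA.1.apply j i, Complex.star_def, Complex.mul_conj'] at hdet
  have hi := (Complex.nonneg_iff.mp (hA.diag_nonneg (i := i))).2
  have hj := (Complex.nonneg_iff.mp (hA.diag_nonneg (i := j))).2
  simpa [Complex.mul_re, ← hi, ← hj, ← Complex.ofReal_pow] using
    (Complex.nonneg_iff.mp hdet).1

lemma purity_eq_sum_norm_sq {n : Type*} [Fintype n] {M : Matrix n n ℂ} (hM : M.IsHermitian) :
    purity M = ∑ a, ∑ b, ‖M a b‖ ^ 2 := by
  have hentry (a b : n) : M a b * M b a = ((‖M a b‖ ^ 2 : ℝ) : ℂ) := by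
    rw [← hM.apply b a, Complex.star_def, Complex.mul_conj', Complex.ofReal_pow]
  simp only [purity, Matrix.trace, Matrix.diag_apply, Matrix.mul_apply, hentry,
    ← Complex.ofReal_sum, Complex.ofReal_re]

lemma Matrix.PosSemidef.purity_le_re_trace_sq {n : Type*} [Fintype n] {A : Matrix n n ℂ}
    (hA : A.PosSemidef) : purity A ≤ A.trace.re ^ 2 := by
  rw [purity_eq_sum_norm_sq hA.1, Matrix.trace, Complex.re_sum, sq, Finset.sum_mul_sum]
  exact Finset.sum_le_sum fun a _ => Finset.sum_le_sum fun b _ => hA.norm_apply_sq_le a b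

section PartialTrace

variable {A B : Type*} [Fintype A] [Fintype B]

lemma trB_eq_sum_submatrix (ρ : Matrix (A × B) (A × B) ℂ) :
    trB ρ = ∑ k, ρ.submatrix (·, k) (·, k) := by
  ext i j
  simp [trB, Matrix.sum_apply]

lemma Matrix.PosSemidef.trB {ρ : Matrix (A × B) (A × B) ℂ} (hρ : ρ.PosSemidef) :
    (_root_.trB ρ).PosSemidef := by
  rw [trB_eq_sum_submatrix]
  exact Matrix.posSemidef_sum _ fun k _ => hρ.submatrix _

lemma trace_trB (ρ : Matrix (A × B) (A × B) ℂ) : (trB ρ).trace = ρ.trace := by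
  simp [trB, Matrix.trace, Fintype.sum_prod_type]

lemma trB_sum_smul {ι : Type*} [Fintype ι] (c : ι → ℂ) (M : ι → Matrix (A × B) (A × B) ℂ) :
    trB (∑ i, c i • M i) = ∑ i, c i • trB (M i) := by
  ext a b
  simp only [trB, Matrix.sum_apply, Matrix.smul_apply, smul_eq_mul, Finset.mul_sum]
  exact Finset.sum_comm

lemma purity_trB_le_one {ρ : Matrix (A × B) (A × B) ℂ} (hρ : ρ.PosSemidef)
    (htr : ρ.trace = 1) : purity (trB ρ) ≤ 1 := by
  simpa [trace_trB, htr] using hρ.trB.purity_le_re_trace_sq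

end PartialTrace

lemma posSemidef_projM {n : Type*} [Fintype n] (φ : n → ℂ) : (projM φ).PosSemidef :=
  Matrix.posSemidef_vecMulVec_self_star φ

lemma trace_projM {n : Type*} [Fintype n] (φ : n → ℂ) :
    (projM φ).trace = ((∑ x, ‖φ x‖ ^ 2 : ℝ) : ℂ) := by
  simp [projM, Matrix.trace, Complex.mul_conj']

lemma norm_sum_mul_sq_le {ι : Type*} [Fintype ι] {p : ι → ℝ} (hp : ∀ i, 0 ≤ p i)
    (hs : ∑ i, p i = 1) (z : ι → ℂ) :
    ‖∑ i, (p i : ℂ) * z i‖ ^ 2 ≤ ∑ i, p i * ‖z i‖ ^ 2 :=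
  calc ‖∑ i, (p i : ℂ) * z i‖ ^ 2 ≤ (∑ i, p i * ‖z i‖) ^ 2 := by
        gcongr
        refine (norm_sum_le _ _).trans_eq (Finset.sum_congr rfl fun i _ => ?_)
        rw [norm_mul, Complex.norm_of_nonneg (hp i)]
    _ ≤ ∑ i, p i * ‖z i‖ ^ 2 :=
        Real.pow_arith_mean_le_arith_mean_pow _ p _ (fun i _ => hp i) hs
          (fun i _ => norm_nonneg _) 2

lemma purity_sum_smul_le {n ι : Type*} [Fintype n] [Fintype ι] {p : ι → ℝ}
    (hp : ∀ i, 0 ≤ p i) (hs : ∑ i, p i = 1) {M : ι → Matrix n n ℂ} (hM : ∀ i, (M i).IsHermitian) :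
    purity (∑ i, (p i : ℂ) • M i) ≤ ∑ i, p i * purity (M i) := by
  have hsum : (∑ i, (p i : ℂ) • M i).IsHermitian :=
    isSelfAdjoint_sum _ fun i _ => IsSelfAdjoint.smul (Complex.conj_ofReal (p i)) (hM i)
  simp only [purity_eq_sum_norm_sq hsum, purity_eq_sum_norm_sq (hM _), Finset.mul_sum]
  calc ∑ a, ∑ b, ‖(∑ i, (p i : ℂ) • M i) a b‖ ^ 2
      ≤ ∑ a, ∑ b, ∑ i, p i * ‖M i a b‖ ^ 2 := by
        gcongr with a _ b _
        simpa only [Matrix.sum_apply, Matrix.smul_apply, smul_eq_mul] using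
          norm_sum_mul_sq_le hp hs fun i => M i a b
    _ = ∑ i, ∑ a, ∑ b, p i * ‖M i a b‖ ^ 2 := by
        simp only [Finset.sum_comm (γ := ι)]

lemma Iconc_sq {A B : Type*} [Fintype A] [Fintype B] {φ : A × B → ℂ}
    (hφ : ∑ x, ‖φ x‖ ^ 2 = 1) : Iconc φ ^ 2 = Csq φ := by
  have := purity_trB_le_one (posSemidef_projM φ) (by simp [trace_projM, hφ])
  exact Real.sq_sqrt (by unfold Csq; linarith)

section Decomposition

variable {A B : Type*} [Fintype A] [Fintype B] {ρ : Matrix (A × B) (A × B) ℂ} {m : ℕ}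
  {p : Fin m → ℝ} {φ : Fin m → A × B → ℂ}

lemma IsDecomp.trace_eq (hd : IsDecomp ρ p φ) : ρ.trace = ((∑ i, p i : ℝ) : ℂ) := by
  simp [hd.2.2, Matrix.trace_sum, trace_projM, hd.2.1]

lemma IsDecomp.sum_Iconc_sq_le (hd : IsDecomp ρ p φ) (htr : ρ.trace = 1) :
    (∑ i, p i * Iconc (φ i)) ^ 2 ≤ 2 * (1 - purity (trB ρ)) := by
  have hs : ∑ i, p i = 1 := by exact_mod_cast hd.trace_eq.symm.trans htr
  obtain ⟨hp, hφ, rfl⟩ := hd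
  have jensen : (∑ i, p i * Iconc (φ i)) ^ 2 ≤ ∑ i, p i * Csq (φ i) := by
    refine (Real.pow_arith_mean_le_arith_mean_pow _ p (fun i => Iconc (φ i))
      (fun i _ => hp i) hs (fun i _ => Real.sqrt_nonneg _) 2).trans_eq ?_
    exact Finset.sum_congr rfl fun i _ => by rw [Iconc_sq (hφ i)]
  have mixing : purity (trB (∑ i, (p i : ℂ) • projM (φ i)))
      ≤ ∑ i, p i * purity (trB (projM (φ i))) := by
    rw [trB_sum_smul]
    exact purity_sum_smul_le hp hs fun i => (posSemidef_projM (φ i)).trB.1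
  have hCsq : ∑ i, p i * Csq (φ i)
      = 2 * ∑ i, p i - 2 * ∑ i, p i * purity (trB (projM (φ i))) := by
    rw [Finset.mul_sum, Finset.mul_sum, ← Finset.sum_sub_distrib]
    exact Finset.sum_congr rfl fun i _ => by unfold Csq; ring
  linarith

end Decomposition

/-- Upper bound for the entanglement of assistance:
`E_a(ρ_{AB})² ≤ 2 (1 − Tr ρ_A²)` where `ρ_A = Tr_B ρ_{AB}`. -/
theorem Ea_sq_le {d₁ d₂ : ℕ} (ρ : Matrix (Fin d₁ × Fin d₂) (Fin d₁ × Fin d₂) ℂ)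
    (hρ : ρ.PosSemidef) (htr : ρ.trace = 1) :
    Ea ρ ^ 2 ≤ 2 * (1 - purity (trB ρ)) := by
  have hbound : 0 ≤ 2 * (1 - purity (trB ρ)) := by linarith [purity_trB_le_one hρ htr]
  have hEa_nonneg : 0 ≤ Ea ρ := Real.sSup_nonneg fun v ⟨m, p, φ, hd, hv⟩ =>
    hv ▸ Finset.sum_nonneg fun i _ => mul_nonneg (hd.1 i) (Real.sqrt_nonneg _)
  have hEa_le : Ea ρ ≤ √(2 * (1 - purity (trB ρ))) :=
    Real.sSup_le (fun v ⟨m, p, φ, hd, hv⟩ =>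
      hv ▸ (le_abs_self _).trans (Real.abs_le_sqrt (hd.sum_Iconc_sq_le htr)))
      (Real.sqrt_nonneg _)
  exact (Real.le_sqrt hEa_nonneg hbound).mp hEa_le

end
end

section
/- Let L be a real 3×3 matrix with LᵀL having eigenvalues λ_x ≤ λ_y ≤ λ_z (assume LᵀL diagonal with these diagonal entries), and let r ∈ ℝ³ with |r| ≤ 1. Then the minimum of ∑_j p_j xⱼᵀ LᵀL xⱼ over probability distributions {p_j} and vectors {x_j} satisfying ∑_j p_j x_j = 0 and |r + x_j| = 1 for all j equals λ_x (1 − |r|²). -/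
open scoped BigOperators

/-- Lower bound: every feasible value is at least `l 0 * (1 - |r|²)`. -/
lemma min_qf_lb (l : Fin 3 → ℝ) (h0 : 0 ≤ l 0)
    (h01 : l 0 ≤ l 1) (h12 : l 1 ≤ l 2)
    (r : Fin 3 → ℝ) (m : ℕ) (p : Fin m → ℝ) (x : Fin m → Fin 3 → ℝ)
    (hp : ∀ j, 0 ≤ p j) (hps : (∑ j, p j) = 1)
    (hx0 : ∀ i, (∑ j, p j * x j i) = 0)
    (hxr : ∀ j, (∑ i, (r i + x j i) ^ 2) = 1) :
    l 0 * (1 - ∑ i, r i ^ 2) ≤ ∑ j, p j * ∑ i, l i * x j i ^ 2 := by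
  have hswap : ∑ j, p j * ∑ i, r i * x j i = 0 := by
    have : ∑ j, p j * ∑ i, r i * x j i = ∑ i, r i * ∑ j, p j * x j i := by
      simp_rw [Finset.mul_sum]
      rw [Finset.sum_comm]
      exact Finset.sum_congr rfl fun i _ => Finset.sum_congr rfl fun j _ => by ring
    simp [this, hx0]
  have expand : ∀ j, p j * ∑ i, (x j i) ^ 2 =
      p j * ∑ i, (r i + x j i) ^ 2 - p j * (∑ i, r i ^ 2)
        - 2 * (p j * ∑ i, r i * x j i) := by
    intro j
    simp only [Fin.sum_univ_three]
    ring
  have key : ∑ j, p j * ∑ i, (x j i) ^ 2 = 1 - ∑ i, r i ^ 2 := by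
    rw [Finset.sum_congr rfl fun j _ => expand j]
    rw [Finset.sum_sub_distrib, Finset.sum_sub_distrib]
    rw [← Finset.mul_sum, hswap, ← Finset.sum_mul, hps]
    simp [hxr, hps]
  have pointwise : ∀ j, l 0 * ∑ i, (x j i) ^ 2 ≤ ∑ i, l i * (x j i) ^ 2 := by
    intro j
    rw [Fin.sum_univ_three, Fin.sum_univ_three]
    nlinarith [sq_nonneg (x j 1), sq_nonneg (x j 2)]
  calc l 0 * (1 - ∑ i, r i ^ 2) = ∑ j, p j * (l 0 * ∑ i, (x j i) ^ 2) := by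
        simp_rw [mul_left_comm (p _)]
        rw [← Finset.mul_sum, key]
    _ ≤ ∑ j, p j * ∑ i, l i * (x j i) ^ 2 :=
        Finset.sum_le_sum fun j _ => mul_le_mul_of_nonneg_left (pointwise j) (hp j)

/-- The optimal-measurement minimization: with `LᵀL = diag(l 0, l 1, l 2)`,
`0 ≤ l 0 ≤ l 1 ≤ l 2`, and a Bloch vector `r` with `|r| ≤ 1`, the minimum of
`∑ j, p j * xⱼᵀ LᵀL xⱼ` over probability distributions `p` and vectors `x j`
with `∑ j, p j • x j = 0` and `|r + x j| = 1` equals `l 0 * (1 − |r|²)`. -/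
theorem min_quadratic_form (l : Fin 3 → ℝ) (h0 : 0 ≤ l 0)
    (h01 : l 0 ≤ l 1) (h12 : l 1 ≤ l 2)
    (r : Fin 3 → ℝ) (hr : (∑ i, r i ^ 2) ≤ 1) :
    sInf {v | ∃ (m : ℕ) (p : Fin m → ℝ) (x : Fin m → Fin 3 → ℝ),
        (∀ j, 0 ≤ p j) ∧ (∑ j, p j) = 1 ∧
        (∀ i, (∑ j, p j * x j i) = 0) ∧
        (∀ j, (∑ i, (r i + x j i) ^ 2) = 1) ∧
        v = ∑ j, p j * ∑ i, l i * x j i ^ 2} =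
      l 0 * (1 - ∑ i, r i ^ 2) := by
  have hA : (∑ i, r i ^ 2) = r 0 ^ 2 + r 1 ^ 2 + r 2 ^ 2 := by
    rw [Fin.sum_univ_three]
  -- membership witness
  have hmem : l 0 * (1 - ∑ i, r i ^ 2) ∈ {v | ∃ (m : ℕ) (p : Fin m → ℝ) (x : Fin m → Fin 3 → ℝ),
        (∀ j, 0 ≤ p j) ∧ (∑ j, p j) = 1 ∧
        (∀ i, (∑ j, p j * x j i) = 0) ∧
        (∀ j, (∑ i, (r i + x j i) ^ 2) = 1) ∧
        v = ∑ j, p j * ∑ i, l i * x j i ^ 2} := by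
    set s : ℝ := Real.sqrt (1 - r 1 ^ 2 - r 2 ^ 2) with hs
    have hs2nonneg : 0 ≤ 1 - r 1 ^ 2 - r 2 ^ 2 := by nlinarith [sq_nonneg (r 0)]
    have hs2 : s ^ 2 = 1 - r 1 ^ 2 - r 2 ^ 2 := Real.sq_sqrt hs2nonneg
    have hr0s : r 0 ^ 2 ≤ s ^ 2 := by rw [hs2]; nlinarith
    have hsnn : 0 ≤ s := Real.sqrt_nonneg _
    rcases eq_or_lt_of_le hsnn with hs0 | hspos
    · -- s = 0 : then r 0 = 0 and |r|² = 1; witness x = 0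
      have hr00 : r 0 = 0 := by nlinarith
      have hA1 : (∑ i, r i ^ 2) = 1 := by rw [hA]; nlinarith
      refine ⟨1, fun _ => 1, fun _ _ => 0, fun _ => zero_le_one, by simp, by simp, ?_, ?_⟩
      · intro j; simpa using hA1
      · simp [hA1]
    · refine ⟨2, ![(s + r 0) / (2 * s), (s - r 0) / (2 * s)],
        ![![s - r 0, 0, 0], ![-s - r 0, 0, 0]], ?_, ?_, ?_, ?_, ?_⟩
      · intro j
        have h1 : 0 ≤ s + r 0 := by nlinarith [sq_nonneg (s + r 0)]
        have h2 : 0 ≤ s - r 0 := by nlinarith [sq_nonneg (s - r 0)]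
        fin_cases j <;> simp <;> positivity
      · simp [Fin.sum_univ_two]
        field_simp
        ring
      · intro i
        fin_cases i <;> simp [Fin.sum_univ_two]
        field_simp
        ring
      · intro j
        fin_cases j <;> simp [Fin.sum_univ_three] <;> nlinarith
      · simp [Fin.sum_univ_two, Fin.sum_univ_three, hA]
        field_simp
        linear_combination (-2 * s * l 0) * hs2
  apply le_antisymm
  · exact csInf_le ⟨l 0 * (1 - ∑ i, r i ^ 2), by
      rintro v ⟨m, p, x, hp, hps, hx0, hxr, rfl⟩
      exact min_qf_lb l h0 h01 h12 r m p x hp hps hx0 hxr⟩ hmem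
  · refine le_csInf ⟨_, hmem⟩ ?_
    rintro v ⟨m, p, x, hp, hps, hx0, hxr, rfl⟩
    exact min_qf_lb l h0 h01 h12 r m p x hp hps hx0 hxr
end

section
/- With the setup above, achievability: if |r| < 1 and r is along the x-axis (or more generally), there exist a two-point probability distribution {p₁, p₂} and vectors x₁, x₂ with y- and z-components zero, ∑_j p_j x_j = 0, |r + x_j| = 1, achieving ∑_j p_j xⱼᵀ D x_j = λ_x (1 − |r|²). -/
open scoped BigOperators

/-- Achievability of the Bloch-sphere minimization: with
`D = diag(l 0, l 1, l 2)`, `0 ≤ l 0 ≤ l 1 ≤ l 2` and `|r| ≤ 1`, there is a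
two-point probability distribution and vectors with vanishing `y` and `z`
components, averaging to zero and lying on the sphere `|r + x j| = 1`, that
achieve the value `l 0 * (1 − |r|²)`. -/
theorem quadratic_form_achieved (l : Fin 3 → ℝ) (h0 : 0 ≤ l 0)
    (h01 : l 0 ≤ l 1) (h12 : l 1 ≤ l 2)
    (r : Fin 3 → ℝ) (hr : (∑ i, r i ^ 2) ≤ 1) :
    ∃ (p : Fin 2 → ℝ) (x : Fin 2 → Fin 3 → ℝ),
      (∀ j, x j 1 = 0) ∧ (∀ j, x j 2 = 0) ∧
      (∀ j, 0 ≤ p j) ∧ (∑ j, p j) = 1 ∧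
      (∀ i, (∑ j, p j * x j i) = 0) ∧
      (∀ j, (∑ i, (r i + x j i) ^ 2) = 1) ∧
      (∑ j, p j * ∑ i, l i * x j i ^ 2) = l 0 * (1 - ∑ i, r i ^ 2) := by
  have hsum : (∑ i, r i ^ 2) = r 0 ^ 2 + r 1 ^ 2 + r 2 ^ 2 := by
    simp [Fin.sum_univ_three]
  set s := r 0 with hs
  set q : ℝ := 1 - r 1 ^ 2 - r 2 ^ 2 with hq
  have hq0 : s ^ 2 ≤ q := by rw [hsum] at hr; simp only [hq]; linarith
  have hqnn : 0 ≤ q := le_trans (sq_nonneg s) hq0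
  set t := Real.sqrt q with ht
  have ht2 : t ^ 2 = q := Real.sq_sqrt hqnn
  have htnn : 0 ≤ t := Real.sqrt_nonneg q
  have hst : |s| ≤ t := by
    rw [ht, ← Real.sqrt_sq_eq_abs]; exact Real.sqrt_le_sqrt hq0
  have hst1 : -t ≤ s := neg_le_of_abs_le hst
  have hst2 : s ≤ t := le_of_abs_le hst
  by_cases h : t = 0
  · have hq' : q = 0 := by rw [← ht2, h]; ring
    have hs0 : s = 0 := by nlinarith [sq_nonneg s]
    refine ⟨![1/2, 1/2], ![![0,0,0], ![0,0,0]], ?_, ?_, ?_, ?_, ?_, ?_, ?_⟩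
    · intro j; fin_cases j <;> simp
    · intro j; fin_cases j <;> simp
    · intro j; fin_cases j <;> norm_num
    · simp [Fin.sum_univ_two]; norm_num
    · intro i; fin_cases i <;> simp [Fin.sum_univ_two]
    · intro j
      fin_cases j <;> simp only [Fin.sum_univ_three, Fin.mk_zero, Fin.mk_one,
        Matrix.cons_val_zero, Matrix.cons_val_one, Matrix.head_cons,
        Matrix.cons_val_two, Matrix.tail_cons, Fin.isValue] <;>
        rw [← hs] <;> linear_combination (hq'.symm.trans hq) + s * hs0
    · rw [hsum]
      simp only [Fin.sum_univ_two, Fin.sum_univ_three, Fin.mk_zero, Fin.mk_one,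
        Matrix.cons_val_zero, Matrix.cons_val_one, Matrix.head_cons,
        Matrix.cons_val_two, Matrix.tail_cons, Fin.isValue]
      linear_combination l 0 * (hq'.symm.trans hq) + l 0 * s * hs0
  · have htpos : 0 < t := lt_of_le_of_ne htnn (Ne.symm h)
    have h2t : (2 * t) ≠ 0 := by positivity
    refine ⟨![(t+s)/(2*t), (t-s)/(2*t)], ![![t-s,0,0], ![-t-s,0,0]],
      ?_, ?_, ?_, ?_, ?_, ?_, ?_⟩
    · intro j; fin_cases j <;> simp
    · intro j; fin_cases j <;> simp
    · intro j; fin_cases j <;> simp <;> apply div_nonneg <;> linarith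
    · simp [Fin.sum_univ_two]; field_simp; ring
    · intro i
      fin_cases i
      · simp [Fin.sum_univ_two]; field_simp; ring
      · simp [Fin.sum_univ_two]
      · simp [Fin.sum_univ_two]
    · intro j
      fin_cases j <;> simp only [Fin.sum_univ_three, Fin.mk_zero, Fin.mk_one,
        Matrix.cons_val_zero, Matrix.cons_val_one, Matrix.head_cons,
        Matrix.cons_val_two, Matrix.tail_cons, Fin.isValue] <;>
        rw [← hs] <;> linear_combination ht2.trans hq
    · rw [hsum]
      rw [Fin.sum_univ_two]
      simp only [Fin.sum_univ_three, Matrix.cons_val_zero, Matrix.cons_val_one,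
        Matrix.head_cons, Matrix.cons_val_two, Matrix.tail_cons, Fin.isValue]
      field_simp
      linear_combination (2 * t * l 0) * (ht2.trans hq)
end

section
/- Let ρ be the 4×4 Hermitian matrix (1/4)[I + ∑_i t_i σ_i ⊗ I + ∑_i R_i σ_i ⊗ σ_i] with real parameters t_1, t_2, t_3, R_1, R_2, R_3. If ρ is positive semidefinite, then 1 − t_1² − t_2² − t_3² ≥ R_3². -/
/-!
The principal 2×2 minors of `4ρ` on the index pairs `{0, 2}` and `{1, 3}` are
`1 - (t₃ + R₃)² - t₁² - t₂²` and `1 - (t₃ - R₃)² - t₁² - t₂²`; both are nonnegative for a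
positive semidefinite `ρ`, and their average is `1 - t₁² - t₂² - t₃² - R₃²`.
-/

open scoped Matrix ComplexOrder
open Complex

theorem Matrix.PosSemidef.norm_sq_apply_le_re_mul_re {𝕜 n : Type*} [RCLike 𝕜] [Fintype n]
    {A : Matrix n n 𝕜} (hA : A.PosSemidef) (i j : n) :
    ‖A i j‖ ^ 2 ≤ RCLike.re (A i i) * RCLike.re (A j j) := by
  have hdet := (hA.submatrix ![i, j]).det_nonneg
  simp only [Matrix.det_fin_two, Matrix.submatrix_apply, Matrix.cons_val_zero,
    Matrix.cons_val_one] at hdet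
  rw [← hA.1.apply j i, ← hA.1.coe_re_apply_self i, ← hA.1.coe_re_apply_self j,
    RCLike.star_def, RCLike.mul_conj] at hdet
  exact_mod_cast sub_nonneg.mp hdet

/-- Positivity of the Bloch-form two-qubit density matrix
`ρ = (1/4)[I + ∑ tᵢ σᵢ⊗I + ∑ Rᵢ σᵢ⊗σᵢ]` implies `1 − t₁² − t₂² − t₃² ≥ R₃²`. -/
theorem bloch_pos_constraint (t1 t2 t3 R1 R2 R3 : ℝ)
    (hρ : (((1 / 4 : ℂ) • !![1 + (R3 : ℂ) + t3, 0, (t1 : ℂ) - t2 * I, (R1 : ℂ) - R2;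
        0, 1 - (R3 : ℂ) + t3, (R1 : ℂ) + R2, (t1 : ℂ) - t2 * I;
        (t1 : ℂ) + t2 * I, (R1 : ℂ) + R2, 1 - (R3 : ℂ) - t3, 0;
        (R1 : ℂ) - R2, (t1 : ℂ) + t2 * I, 0, 1 + (R3 : ℂ) - t3]) :
      Matrix (Fin 4) (Fin 4) ℂ).PosSemidef) :
    1 - t1 ^ 2 - t2 ^ 2 - t3 ^ 2 ≥ R3 ^ 2 := by
  have h02 := hρ.norm_sq_apply_le_re_mul_re 0 2
  have h13 := hρ.norm_sq_apply_le_re_mul_re 1 3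
  simp only [Matrix.smul_apply, Matrix.of_apply, Matrix.cons_val', Matrix.cons_val,
    Matrix.cons_val_fin_one, smul_eq_mul, norm_mul, mul_pow, Complex.sq_norm, Complex.normSq_apply,
    RCLike.re_to_complex] at h02 h13
  norm_num at h02 h13
  linarith
end
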